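/- Every finite group G with |Cent(G)| = 9 is solvable. -/

import Mathlib

/-- The set of distinct centralizers of elements of `G`. -/
def Cent (G : Type*) [Group G] : Set (Subgroup G) :=
  Set.range fun x : G => Subgroup.centralizer {x}

/-!
Take a minimal counterexample `G`. Since `|Cent H| ≤ |Cent G|` for every subgroup `H`, all proper
subgroups are solvable, hence have index at least 5: otherwise `G` acts on the cosets with solvable
kernel and image in `S₄`. If `C(x)` is normal, all conjugates of `x` have the same centralizer
`C(x)`, so they commute and `x` lies in the solvable radical `R`. The non-normal centralizers are at
most 8 and fall into conjugation orbits of size at least 5, so they are all conjugate to a single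
`D = C(g₀)`. Hence every element of `G` is conjugate into `D ⊔ R`; as a finite group is never the
union of the conjugates of a proper subgroup, `D ⊔ R = G`, which is solvable since `D` and `R` are.
-/

open Subgroup MulAction Pointwise

theorem Group.isSolvable_of_isMulCommutative {G : Type*} [Group G] [IsMulCommutative G] :
    Group.IsSolvable G :=
  Group.isSolvable_of_comm mul_comm'

theorem alternatingGroup.isSolvable_of_card_le_four {α : Type*} [Fintype α] [DecidableEq α]
    (hα : Nat.card α ≤ 4) : Group.IsSolvable (alternatingGroup α) := by
  rcases hα.lt_or_eq with hα | hα
  · have := isMulCommutative_of_card_le_three (α := α) (by omega)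
    exact Group.isSolvable_of_isMulCommutative
  · have := normal_kleinFour hα
    have := (kleinFour_isKleinFour hα).isMulCommutative
    have : IsMulCommutative (alternatingGroup α ⧸ kleinFour α) :=
      Normal.quotient_commutative_iff_commutator_le.mpr (kleinFour_eq_commutator hα).ge
    exact (Group.isSolvable_iff_subgroup_quotient (kleinFour α)).mpr
      ⟨Group.isSolvable_of_isMulCommutative, Group.isSolvable_of_isMulCommutative⟩

theorem Equiv.Perm.isSolvable_of_card_le_four {α : Type*} [Finite α] (hα : Nat.card α ≤ 4) :
    Group.IsSolvable (Equiv.Perm α) := by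
  classical
  have := Fintype.ofFinite α
  have := alternatingGroup.isSolvable_of_card_le_four hα
  exact Group.isSolvable_of_ker_le_range (alternatingGroup α).subtype Equiv.Perm.sign
    (by rw [← alternatingGroup_eq_sign_ker, range_subtype])

theorem Group.isSolvable_of_index_le_four {G : Type*} [Group G] (H : Subgroup G) [H.FiniteIndex]
    [Group.IsSolvable H] (hH : H.index ≤ 4) : Group.IsSolvable G := by
  have : Group.IsSolvable (Equiv.Perm (G ⧸ H)) :=
    Equiv.Perm.isSolvable_of_card_le_four (by rwa [← index_eq_card])
  exact Group.isSolvable_of_ker_le_range H.subtype (MulAction.toPermHom G (G ⧸ H))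
    (by rw [← normalCore_eq_ker, range_subtype]; exact normalCore_le H)

theorem Subgroup.isSolvable_sup {G : Type*} [Group G] (H N : Subgroup G) [N.Normal]
    [Group.IsSolvable H] [Group.IsSolvable N] : Group.IsSolvable ↥(H ⊔ N) := by
  have : Group.IsSolvable (N.subgroupOf (H ⊔ N)) :=
    Group.isSolvable_of_isSolvable_injective
      (f := (subgroupOfEquivOfLe le_sup_right).toMonoidHom) (MulEquiv.injective _)
  have : Group.IsSolvable (↥(H ⊔ N) ⧸ N.subgroupOf (H ⊔ N)) :=
    Group.isSolvable_of_surjective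
      (f := (QuotientGroup.quotientInfEquivProdNormalQuotient H N).toMonoidHom)
      (MulEquiv.surjective _)
  exact (Group.isSolvable_iff_subgroup_quotient (N.subgroupOf (H ⊔ N))).mpr ⟨‹_›, ‹_›⟩

theorem Subgroup.eq_top_of_forall_exists_conj_mem {G : Type*} [Group G] [Finite G]
    (H : Subgroup G) (h : ∀ g : G, ∃ x : G, x⁻¹ * g * x ∈ H) : H = ⊤ := by
  have := Fintype.ofFinite G
  have hfix : ∀ g : G, 1 ≤ Nat.card (fixedBy (G ⧸ H) g) := by
    intro g
    obtain ⟨x, hx⟩ := h g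
    have hmem : (x : G ⧸ H) ∈ fixedBy (G ⧸ H) g := by
      rw [mem_fixedBy, Quotient.smul_mk, eq_comm, QuotientGroup.eq, smul_eq_mul, ← mul_assoc]
      exact hx
    have : Nonempty (fixedBy (G ⧸ H) g) := ⟨⟨_, hmem⟩⟩
    exact Nat.card_pos
  -- Burnside's lemma for the transitive action on `G ⧸ H`
  have hsum : ∑ g : G, Nat.card (fixedBy (G ⧸ H) g) = ∑ _g : G, 1 := by
    have : Nat.card (orbitRel.Quotient G (G ⧸ H)) = 1 :=
      Nat.card_eq_one_iff_unique.mpr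
        ⟨(pretransitive_iff_subsingleton_quotient G (G ⧸ H)).mp inferInstance, inferInstance⟩
    rw [← Nat.card_sigma, Nat.card_congr (sigmaFixedByEquivOrbitsProdGroup G (G ⧸ H)),
      Nat.card_prod, this, one_mul, Finset.sum_const, smul_eq_mul, mul_one, Finset.card_univ,
      Nat.card_eq_fintype_card]
  have h1 := (Finset.sum_eq_sum_iff_of_le (fun g _ => hfix g)).mp hsum.symm 1 (Finset.mem_univ 1)
  rw [fixedBy_one_eq_univ, Nat.card_univ] at h1
  exact index_eq_one.mp (by rw [index_eq_card]; exact h1.symm)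

theorem MulAction.mem_orbit_of_ncard_lt_two_mul {M α : Type*} [Group M] [MulAction M α]
    {S : Set α} (hfin : S.Finite) (hS : ∀ c : M, ∀ a ∈ S, c • a ∈ S) {k : ℕ}
    (hk : ∀ a ∈ S, k ≤ (orbit M a).ncard) (hcard : S.ncard < 2 * k) {a b : α}
    (ha : a ∈ S) (hb : b ∈ S) : b ∈ orbit M a := by
  have horb : ∀ a ∈ S, orbit M a ⊆ S := by
    rintro a ha _ ⟨c, rfl⟩
    exact hS c a ha
  rcases orbit.eq_or_disjoint (G := M) b a with h | h
  · exact h ▸ mem_orbit_self b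
  · have := Set.ncard_union_eq h (hfin.subset (horb b hb)) (hfin.subset (horb a ha))
    have := Set.ncard_le_ncard (Set.union_subset (horb b hb) (horb a ha)) hfin
    have := hk a ha
    have := hk b hb
    omega

theorem Subgroup.normalizer_eq_comap_stabilizer {G : Type*} [Group G] (H : Subgroup G) :
    normalizer (H : Set G) =
      comap (ConjAct.toConjAct.toMonoidHom : G →* ConjAct G) (stabilizer (ConjAct G) H) := by
  ext g
  rw [mem_comap, mem_stabilizer_iff, ← conjAct_pointwise_smul_iff]
  rfl

theorem Subgroup.card_orbit_conjAct {G : Type*} [Group G] (H : Subgroup G) :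
    Nat.card (orbit (ConjAct G) H) = (normalizer (H : Set G)).index := by
  rw [Nat.card_congr (orbitEquivQuotientStabilizer _ H), ← index_eq_card,
    normalizer_eq_comap_stabilizer, index_comap_of_surjective _ ConjAct.toConjAct.surjective]

theorem Subgroup.conjAct_smul_centralizer_singleton {G : Type*} [Group G] (c : ConjAct G)
    (x : G) : c • centralizer {x} = centralizer {c • x} := by
  ext u
  rw [mem_pointwise_smul_iff_inv_smul_mem, mem_centralizer_singleton_iff,
    mem_centralizer_singleton_iff, ConjAct.smul_def, ConjAct.smul_def, ConjAct.ofConjAct_inv,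
    inv_inv]
  set a := ConjAct.ofConjAct c
  constructor <;> intro h
  · calc u * (a * x * a⁻¹) = a * ((a⁻¹ * u * a) * x) * a⁻¹ := by group
      _ = a * x * a⁻¹ * u := by rw [h]; group
  · calc a⁻¹ * u * a * x = a⁻¹ * (u * (a * x * a⁻¹)) * a := by group
      _ = x * (a⁻¹ * u * a) := by rw [h]; group

theorem Subgroup.isMulCommutative_normalClosure_of_normal_centralizer {G : Type*} [Group G]
    {x : G} (hx : (centralizer {x}).Normal) : IsMulCommutative (normalClosure {x}) := by
  have hconj : ∀ a ∈ Group.conjugatesOfSet {x}, centralizer {a} = centralizer {x} := by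
    intro a ha
    obtain ⟨y, hy, hya⟩ := Group.mem_conjugatesOfSet_iff.mp ha
    rw [Set.mem_singleton_iff] at hy
    subst hy
    obtain ⟨c, rfl⟩ := ConjAct.mem_orbit_conjAct.mpr hya.symm
    rw [← conjAct_smul_centralizer_singleton, hx.conjAct]
  refine isMulCommutative_closure fun a ha b hb => ?_
  have : a ∈ centralizer {b} := by
    rw [hconj b hb, ← hconj a ha, mem_centralizer_singleton_iff]
  exact mem_centralizer_singleton_iff.mp this

theorem Subgroup.exists_normal_isSolvable_forall_le (G : Type*) [Group G] [Finite G] :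
    ∃ R : Subgroup G, R.Normal ∧ Group.IsSolvable R ∧
      ∀ K : Subgroup G, K.Normal → Group.IsSolvable K → K ≤ R := by
  set S := {K : Subgroup G | K.Normal ∧ Group.IsSolvable K}
  obtain ⟨R, -, ⟨hRn, hRs⟩, hRmax⟩ :=
    S.toFinite.exists_le_maximal (a := ⊥) ⟨normal_bot, inferInstance⟩
  refine ⟨R, hRn, hRs, fun K hKn hKs => ?_⟩
  have hKR : K ⊔ R ∈ S := ⟨sup_normal K R, isSolvable_sup K R⟩
  exact le_sup_left.trans (hRmax hKR le_sup_right)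

section Cent

variable {G : Type*} [Group G]

theorem top_mem_cent : (⊤ : Subgroup G) ∈ Cent G :=
  ⟨1, centralizer_eq_top_iff_subset.mpr (by simp [one_mem])⟩

theorem smul_mem_cent (c : ConjAct G) {C : Subgroup G} (hC : C ∈ Cent G) : c • C ∈ Cent G := by
  obtain ⟨x, rfl⟩ := hC
  exact ⟨c • x, (conjAct_smul_centralizer_singleton c x).symm⟩

theorem ncard_cent_subgroup_le [Finite G] (H : Subgroup G) :
    (Cent H).ncard ≤ (Cent G).ncard := by
  have hsub : Cent H ⊆ (fun K : Subgroup G => K.subgroupOf H) '' Cent G := by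
    rintro _ ⟨x, rfl⟩
    refine ⟨centralizer {(x : G)}, ⟨x, rfl⟩, ?_⟩
    ext g
    simp [mem_subgroupOf, mem_centralizer_singleton_iff, Subtype.ext_iff]
  exact (Set.ncard_le_ncard hsub (Set.toFinite _)).trans (Set.ncard_image_le (Set.toFinite _))

end Cent

theorem Group.isSolvable_of_eq_top {G : Type*} [Group G] {H : Subgroup G} [Group.IsSolvable H]
    (h : H = ⊤) : Group.IsSolvable G :=
  Group.isSolvable_of_surjective (f := H.subtype)
    (by rw [← MonoidHom.range_eq_top, range_subtype, h])

section MinimalCounterexample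

variable {G : Type*} [Group G] [Finite G]

theorem exists_smul_centralizer_eq_of_not_normal
    (hidx : ∀ H : Subgroup G, H ≠ ⊤ → 5 ≤ H.index) (hcent : (Cent G).ncard ≤ 9)
    {x y : G} (hx : ¬(centralizer {x}).Normal) (hy : ¬(centralizer {y}).Normal) :
    ∃ c : ConjAct G, c • centralizer {x} = centralizer {y} := by
  set Q := {C ∈ Cent G | ¬C.Normal}
  have hQ : Q.ncard < 2 * 5 := by
    have hQ : Q ⊆ Cent G \ {⊤} := fun C hC => ⟨hC.1, fun h => hC.2 (h ▸ normal_top)⟩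
    have := Set.ncard_le_ncard hQ (Set.toFinite _)
    rw [Set.ncard_sdiff_singleton_of_mem top_mem_cent] at this
    omega
  have hQinv : ∀ c : ConjAct G, ∀ C ∈ Q, c • C ∈ Q := fun c C hC =>
    ⟨smul_mem_cent c hC.1, fun h => hC.2 (by rw [← inv_smul_smul c C, h.conjAct]; exact h)⟩
  have hQorb : ∀ C ∈ Q, 5 ≤ (orbit (ConjAct G) C).ncard := fun C hC => by
    rw [← Nat.card_coe_set_eq, card_orbit_conjAct]
    exact hidx _ (mt normalizer_eq_top_iff.mp hC.2)
  exact mem_orbit_of_ncard_lt_two_mul (Set.toFinite Q) hQinv hQorb hQ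
    ⟨⟨x, rfl⟩, hx⟩ ⟨⟨y, rfl⟩, hy⟩

theorem isSolvable_of_forall_ne_top_of_ncard_cent_le_nine
    (hsub : ∀ H : Subgroup G, H ≠ ⊤ → Group.IsSolvable H) (hcent : (Cent G).ncard ≤ 9) :
    Group.IsSolvable G := by
  by_contra hG
  have hidx : ∀ H : Subgroup G, H ≠ ⊤ → 5 ≤ H.index := fun H hH => by
    by_contra! h
    have := hsub H hH
    exact hG (Group.isSolvable_of_index_le_four H (by omega))
  obtain ⟨R, hRn, hRs, hRmax⟩ := exists_normal_isSolvable_forall_le G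
  have hR : ∀ x : G, (centralizer {x}).Normal → x ∈ R := fun x hx => by
    have := isMulCommutative_normalClosure_of_normal_centralizer hx
    exact hRmax (normalClosure {x}) normalClosure_normal Group.isSolvable_of_isMulCommutative
      (subset_normalClosure rfl)
  obtain ⟨g₀, hg₀⟩ : ∃ g₀, g₀ ∉ R := by
    by_contra! h
    exact hG (Group.isSolvable_of_eq_top (eq_top_iff.mpr fun g _ => h g))
  set D := centralizer {g₀}
  have hD : ¬D.Normal := mt (hR g₀) hg₀
  have hconj : ∀ g : G, ∃ a : G, a⁻¹ * g * a ∈ D ⊔ R := by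
    intro g
    by_cases hg : g ∈ R
    · exact ⟨1, by simpa using mem_sup_right hg⟩
    obtain ⟨c, hc⟩ :=
      exists_smul_centralizer_eq_of_not_normal hidx hcent hD (mt (hR g) hg)
    have : g ∈ c • D := hc ▸ mem_centralizer_singleton_iff.mpr rfl
    rw [mem_pointwise_smul_iff_inv_smul_mem, ConjAct.smul_def] at this
    exact ⟨ConjAct.ofConjAct c, mem_sup_left (by simpa using this)⟩
  have := hsub D fun h => hD (h ▸ normal_top)
  have := isSolvable_sup D R
  exact hG (Group.isSolvable_of_eq_top (eq_top_of_forall_exists_conj_mem _ hconj))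

end MinimalCounterexample

theorem isSolvable_of_ncard_cent_le_nine (G : Type*) [Group G] [Finite G]
    (h : (Cent G).ncard ≤ 9) : Group.IsSolvable G := by
  induction hn : Nat.card G using Nat.strong_induction_on generalizing G with
  | _ n ih =>
    refine isSolvable_of_forall_ne_top_of_ncard_cent_le_nine (fun H hH => ?_) h
    exact ih _ (hn ▸ (card_le_card_group H).lt_of_ne fun e => hH (eq_top_of_card_eq H e)) H
      ((ncard_cent_subgroup_le H).trans h) rfl

theorem stmt18 (G : Type*) [Group G] [Finite G] (h : (Cent G).ncard = 9) :
    IsSolvable G :=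
  isSolvable_of_ncard_cent_le_nine G h.le
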